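/- arXiv:1411.2734 — 6 statements merged into one kernel-verified Lean document; each statement's English description precedes it below -/
import Mathlib

section
/- Let R be a Noetherian ring, I an ideal of R, and M a finitely generated R-module. Then the set of associated primes Ass_R(H^i_I(M)) is countable for every i ≥ 0. -/
universe u

set_option linter.unusedVariables false
set_option linter.unusedSectionVars false
set_option maxHeartbeats 1000000

open CategoryTheory Limits Opposite Function

section AssFinite

variable {R : Type*} [CommRing R]

theorem myIff [IsNoetherianRing R] {M : Type*} [AddCommGroup M] [Module R M] {p : Ideal R} :
    IsAssociatedPrime p M ↔ p.IsPrime ∧ ∃ x : M, p = (R ∙ x).annihilator := by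
  simp only [isAssociatedPrime_iff, Submodule.bot_colon']

theorem myIsAssociatedPrime_or [IsNoetherianRing R] {M : Type*} [AddCommGroup M] [Module R M]
    (N : Submodule R M) {p : Ideal R} (hp : IsAssociatedPrime p M) :
    IsAssociatedPrime p N ∨ IsAssociatedPrime p (M ⧸ N) := by
  obtain ⟨hpp, x, hx⟩ := myIff.mp hp
  by_cases h : ∀ a : R, a • x ∈ N → a • x = 0
  · right
    refine myIff.mpr ⟨hpp, N.mkQ x, ?_⟩
    ext r
    rw [hx, Submodule.mem_annihilator_span_singleton,
      Submodule.mem_annihilator_span_singleton, ← map_smul,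
      Submodule.mkQ_apply, Submodule.Quotient.mk_eq_zero]
    constructor
    · intro hr
      rw [hr]; exact N.zero_mem
    · intro hr
      exact h r hr
  · left
    push_neg at h
    obtain ⟨a, haN, ha0⟩ := h
    have hap : a ∉ p := by
      intro hap
      rw [hx, Submodule.mem_annihilator_span_singleton] at hap
      exact ha0 hap
    refine myIff.mpr ⟨hpp, ⟨a • x, haN⟩, ?_⟩
    ext r
    rw [Submodule.mem_annihilator_span_singleton]
    have : (r • (⟨a • x, haN⟩ : N) = 0) ↔ r • (a • x) = 0 := by
      constructor
      · intro hr; exact congrArg Subtype.val hr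
      · intro hr; exact Subtype.ext hr
    rw [this, smul_smul, ← Submodule.mem_annihilator_span_singleton, ← hx]
    constructor
    · intro hr
      exact Ideal.mul_mem_right a p hr
    · intro hr
      rcases hpp.mem_or_mem hr with h' | h'
      · exact h'
      · exact absurd h' hap

theorem myAss_cyclic [IsNoetherianRing R] {M : Type*} [AddCommGroup M] [Module R M]
    {x : M} {p : Ideal R} (hpp : p.IsPrime) (hx : p = (R ∙ x).annihilator)
    {q : Ideal R} (hq : IsAssociatedPrime q (↥(R ∙ x))) : q = p := by
  obtain ⟨hqp, z, hz⟩ := myIff.mp hq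
  obtain ⟨b, hb⟩ := Submodule.mem_span_singleton.mp z.2
  have hzb : (z : M) = b • x := hb.symm
  by_cases hz0 : (z : M) = 0
  · exfalso
    apply hqp.ne_top
    rw [hz, Ideal.eq_top_iff_one, Submodule.mem_annihilator_span_singleton]
    exact Subtype.ext (by simp [hz0])
  have hbp : b ∉ p := by
    intro hbp
    rw [hx, Submodule.mem_annihilator_span_singleton] at hbp
    rw [hzb] at hz0; exact hz0 hbp
  ext r
  rw [hz, Submodule.mem_annihilator_span_singleton]
  have : (r • z = 0) ↔ r • (b • x) = 0 := by
    constructor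
    · intro hr
      have := congrArg Subtype.val hr
      rwa [← hzb]
    · intro hr
      exact Subtype.ext (by rw [← hzb] at hr; simpa using hr)
  rw [this, smul_smul, ← Submodule.mem_annihilator_span_singleton, ← hx]
  constructor
  · intro hr
    rcases hpp.mem_or_mem hr with h' | h'
    · exact h'
    · exact absurd h' hbp
  · intro hr
    exact Ideal.mul_mem_right b p hr

theorem myAssFinite [IsNoetherianRing R] (M : Type*) [AddCommGroup M] [Module R M]
    [Module.Finite R M] : (associatedPrimes R M).Finite := by
  haveI : IsNoetherian R M := isNoetherian_of_isNoetherianRing_of_finite R M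
  have key : ∀ N : Submodule R M, (associatedPrimes R (M ⧸ N)).Finite := by
    intro N
    induction N using IsNoetherian.induction with
    | hgt N IH =>
      by_cases hs : Subsingleton (M ⧸ N)
      · rw [associatedPrimes.eq_empty_of_subsingleton]
        exact Set.finite_empty
      haveI : Nontrivial (M ⧸ N) := not_subsingleton_iff_nontrivial.mp hs
      obtain ⟨p, hp⟩ := associatedPrimes.nonempty R (M ⧸ N)
      obtain ⟨hpp, xb, hxb⟩ := myIff.mp hp
      obtain ⟨y, rfl⟩ := N.mkQ_surjective xb
      have hy0 : N.mkQ y ≠ 0 := by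
        intro h0
        apply hpp.ne_top
        rw [hxb, h0, Submodule.span_zero_singleton, Submodule.annihilator_bot]
      set J : Submodule R M := N ⊔ (R ∙ y) with hJ
      have hNJ : N < J := by
        refine lt_of_le_of_ne le_sup_left ?_
        intro h
        apply hy0
        rw [Submodule.mkQ_apply, Submodule.Quotient.mk_eq_zero]
        rw [h]
        exact Submodule.mem_sup_right (Submodule.mem_span_singleton_self y)
      have hmap : J.map N.mkQ = (R ∙ N.mkQ y) := by
        rw [hJ, Submodule.map_sup, Submodule.map_span, Set.image_singleton]
        have : N.map N.mkQ = ⊥ := by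
          ext z
          simp only [Submodule.mem_map, Submodule.mem_bot]
          constructor
          · rintro ⟨m, hm, rfl⟩
            rw [Submodule.mkQ_apply, Submodule.Quotient.mk_eq_zero]
            exact hm
          · rintro rfl
            exact ⟨0, N.zero_mem, map_zero _⟩
        rw [this, bot_sup_eq]
      have e : ((M ⧸ N) ⧸ (R ∙ N.mkQ y)) ≃ₗ[R] M ⧸ J := by
        rw [← hmap]
        exact Submodule.quotientQuotientEquivQuotient N J le_sup_left
      refine Set.Finite.subset ((Set.finite_singleton p).union (IH J hNJ)) ?_
      intro q hq
      rcases myIsAssociatedPrime_or (R ∙ N.mkQ y) hq with h' | h'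
      · left
        exact myAss_cyclic hpp hxb h'
      · right
        exact AssociatedPrimes.mem_iff.mpr ((e.isAssociatedPrime_iff).mp h')
  have e : (M ⧸ (⊥ : Submodule R M)) ≃ₗ[R] M := Submodule.quotEquivOfEqBot ⊥ rfl
  refine Set.Finite.subset (key ⊥) ?_
  intro q hq
  exact AssociatedPrimes.mem_iff.mpr ((e.isAssociatedPrime_iff).mpr hq)

end AssFinite


noncomputable section FinRes

variable (R : Type u) [CommRing R]

open scoped Classical in
/-- Choice of a finite free cover data for a module. -/
def covDat (N : ModuleCat.{u} R) : Σ n : ℕ, (Fin n → R) →ₗ[R] N :=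
  if h : Module.Finite R N then
    ⟨(Module.Finite.exists_fin' R N).choose,
      (Module.Finite.exists_fin' R N).choose_spec.choose⟩
  else ⟨0, 0⟩

/-- A finite free module mapping onto `N` (when `N` is finite). -/
def cov (N : ModuleCat.{u} R) : ModuleCat.{u} R :=
  ModuleCat.of R (Fin (covDat R N).1 → R)

def covπ (N : ModuleCat.{u} R) : cov R N ⟶ N := ModuleCat.ofHom (covDat R N).2

instance (N : ModuleCat.{u} R) : Module.Finite R (cov R N) :=
  inferInstanceAs (Module.Finite R (Fin _ → R))

instance (N : ModuleCat.{u} R) : Module.Free R (cov R N) :=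
  inferInstanceAs (Module.Free R (Fin _ → R))

instance cov_projective (N : ModuleCat.{u} R) : Projective (cov R N) :=
  ModuleCat.projective_of_free (Pi.basisFun R (Fin (covDat R N).1))

open scoped Classical in
instance covπ_epi (N : ModuleCat.{u} R) [h : Module.Finite R N] : Epi (covπ R N) := by
  rw [ModuleCat.epi_iff_surjective]
  show Surjective (covDat R N).2
  rw [covDat, dif_pos h]
  exact (Module.Finite.exists_fin' R N).choose_spec.choose_spec

variable [IsNoetherianRing R]

instance kernel_finite {X Y : ModuleCat.{u} R} [Module.Finite R X] (f : X ⟶ Y) :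
    Module.Finite R ((kernel f : ModuleCat.{u} R) : Type u) := by
  haveI : IsNoetherian R X := isNoetherian_of_isNoetherianRing_of_finite R X
  haveI : Module.Finite R (LinearMap.ker f.hom) :=
    Module.Finite.iff_fg.mpr (IsNoetherian.noetherian _)
  haveI : Module.Finite R ((ModuleCat.of R (LinearMap.ker f.hom) : ModuleCat.{u} R) : Type u) :=
    ‹Module.Finite R (LinearMap.ker f.hom)›
  exact Module.Finite.equiv (ModuleCat.kernelIsoKer f).toLinearEquiv.symm

/-- Analogue of `Projective.d` using finite free covers. -/
def fd {X Y : ModuleCat.{u} R} (f : X ⟶ Y) : cov R (kernel f) ⟶ X :=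
  covπ R (kernel f) ≫ kernel.ι f

@[simp]
lemma fd_comp {X Y : ModuleCat.{u} R} (f : X ⟶ Y) : fd R f ≫ f = 0 := by
  rw [fd, Category.assoc, kernel.condition, comp_zero]

theorem exact_fd {X Y : ModuleCat.{u} R} (f : X ⟶ Y)
    (hX : Module.Finite R (X : Type u)) :
    (ShortComplex.mk (fd R f) f (by simp)).Exact := by
  haveI := hX
  let α : ShortComplex.mk (fd R f) f (by simp) ⟶
      ShortComplex.mk (kernel.ι f) f (by simp) :=
    { τ₁ := covπ R (kernel f)
      τ₂ := 𝟙 _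
      τ₃ := 𝟙 _ }
  have : Epi α.τ₁ := by dsimp [α]; infer_instance
  have : IsIso α.τ₂ := by dsimp [α]; infer_instance
  have : Mono α.τ₃ := by dsimp [α]; infer_instance
  rw [ShortComplex.exact_iff_of_epi_of_isIso_of_mono α]
  apply ShortComplex.exact_of_f_is_kernel
  apply kernelIsKernel

/-- A finite free resolution complex of `Z`. -/
def finResComplex (Z : ModuleCat.{u} R) : ChainComplex (ModuleCat.{u} R) ℕ :=
  ChainComplex.mk' (cov R Z) (cov R (kernel (covπ R Z))) (fd R (covπ R Z))
    (fun f => ⟨_, fd R f, by simp⟩)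

lemma finResComplex_d_1_0 (Z : ModuleCat.{u} R) :
    (finResComplex R Z).d 1 0 = fd R (covπ R Z) := by
  simp [finResComplex]

instance finResComplex_X_projective (Z : ModuleCat.{u} R) (n : ℕ) :
    Projective ((finResComplex R Z).X n) := by
  obtain (_ | _ | _ | n) := n <;> apply cov_projective

instance finResComplex_X_finite (Z : ModuleCat.{u} R) (n : ℕ) :
    Module.Finite R ((finResComplex R Z).X n) := by
  obtain (_ | _ | _ | n) := n <;>
    exact inferInstanceAs (Module.Finite R (Fin _ → R))

instance finResComplex_X_free (Z : ModuleCat.{u} R) (n : ℕ) :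
    Module.Free R ((finResComplex R Z).X n) := by
  obtain (_ | _ | _ | n) := n <;>
    exact inferInstanceAs (Module.Free R (Fin _ → R))

lemma sc_exact_of_iso (C : ChainComplex (ModuleCat.{u} R) ℕ) (n : ℕ)
    (e : C.X (n + 2) ≅ cov R (kernel (C.d (n + 1) n)))
    (h : C.d (n + 2) (n + 1) = e.hom ≫ fd R (C.d (n + 1) n))
    (hX : Module.Finite R (C.X (n + 1))) : (C.sc' (n + 2) (n + 1) n).Exact := by
  let α : ShortComplex.mk (fd R (C.d (n + 1) n)) (C.d (n + 1) n) (fd_comp R _) ⟶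
      C.sc' (n + 2) (n + 1) n :=
    { τ₁ := e.inv
      τ₂ := 𝟙 _
      τ₃ := 𝟙 _
      comm₁₂ := ((Iso.inv_comp_eq _).mpr h).trans (Category.comp_id _).symm
      comm₂₃ := (Category.id_comp _).trans (Category.comp_id _).symm }
  have : Epi α.τ₁ := (inferInstance : Epi e.inv)
  have : IsIso α.τ₂ := (inferInstance : IsIso (𝟙 (C.X (n + 1))))
  have : Mono α.τ₃ := (inferInstance : Mono (𝟙 (C.X n)))
  exact (ShortComplex.exact_iff_of_epi_of_isIso_of_mono α).mp (exact_fd R _ hX)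

lemma finResComplex_exactAt_succ (Z : ModuleCat.{u} R) (n : ℕ) :
    (finResComplex R Z).ExactAt (n + 1) := by
  rw [HomologicalComplex.exactAt_iff' _ (n + 1 + 1) (n + 1) n (by simp) (by simp)]
  exact sc_exact_of_iso R _ n (ChainComplex.mk'XIso _ _ _ _ n)
    (ChainComplex.mk'_d _ _ _ _ n) (finResComplex_X_finite R Z (n + 1))

/-- A projective resolution of a finite module by finite free modules. -/
def finRes (Z : ModuleCat.{u} R) [Module.Finite R Z] : ProjectiveResolution Z where
  complex := finResComplex R Z
  π := (ChainComplex.toSingle₀Equiv _ _).symm ⟨covπ R Z, by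
          rw [finResComplex_d_1_0]; exact fd_comp R _⟩
  quasiIso := ⟨fun n => by
    cases n
    · rw [ChainComplex.quasiIsoAt₀_iff, ShortComplex.quasiIso_iff_of_zeros']
      · refine (ShortComplex.exact_and_epi_g_iff_of_iso ?_).2
          ⟨exact_fd R (covπ R Z) inferInstance, by dsimp; infer_instance⟩
        exact ShortComplex.isoMk (Iso.refl _) (Iso.refl _) (Iso.refl _)
          (by exact (Category.id_comp _).trans (Category.comp_id _).symm)
            (by exact (Category.id_comp _).trans (Category.comp_id _).symm)
      all_goals rfl
    · rw [quasiIsoAt_iff_exactAt']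
      · apply finResComplex_exactAt_succ
      · apply ChainComplex.exactAt_succ_single_obj⟩

@[simp]
lemma finRes_complex (Z : ModuleCat.{u} R) [Module.Finite R Z] :
    (finRes R Z).complex = finResComplex R Z := rfl

end FinRes

section ExtFinite

variable (R : Type u) [CommRing R] [IsNoetherianRing R]

theorem ext_finite (Z M : ModuleCat.{u} R) [Module.Finite R (Z : Type u)]
    [Module.Finite R (M : Type u)] (i : ℕ) :
    Module.Finite R ((((Ext R (ModuleCat.{u} R) i).obj (op Z)).obj M : ModuleCat.{u} R) :
      Type u) := by
  let K := ChainComplex.linearYonedaObj (finResComplex R Z) R M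
  let S := K.sc i
  haveI hX2 : Module.Finite R (S.X₂ : Type u) :=
    Module.Finite.equiv (ModuleCat.homLinearEquiv (S := R)).symm
  haveI : IsNoetherian R (S.X₂ : Type u) :=
    isNoetherian_of_isNoetherianRing_of_finite R _
  haveI hker : Module.Finite R (LinearMap.ker S.g.hom) :=
    Module.Finite.iff_fg.mpr (IsNoetherian.noetherian _)
  haveI hH : Module.Finite R
      (LinearMap.ker S.g.hom ⧸ LinearMap.range S.moduleCatToCycles) :=
    Module.Finite.quotient R _
  haveI hH' : Module.Finite R ((S.moduleCatLeftHomologyData.H : ModuleCat.{u} R) : Type u) :=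
    hH
  haveI hH'' : Module.Finite R
      ((S.moduleCatLeftHomologyData.H : ModuleCat.{u} R) : Type u) := hH
  haveI hHom : Module.Finite R ((S.homology : ModuleCat.{u} R) : Type u) :=
    Module.Finite.equiv S.moduleCatLeftHomologyData.homologyIso.toLinearEquiv.symm
  haveI hHom' : Module.Finite R
      (((((finRes R Z).complex.linearYonedaObj R M).homology i) : ModuleCat.{u} R) :
        Type u) := hHom
  exact Module.Finite.equiv ((finRes R Z).isoExt i M).toLinearEquiv.symm

end ExtFinite


section ColimitAss

variable {R : Type u} [CommRing R] [IsNoetherianRing R]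

theorem myAss_colimit_subset {J : Type} [SmallCategory J] [IsFiltered J]
    (G : J ⥤ ModuleCat.{u} R) [HasColimit G]
    [PreservesColimit G (forget (ModuleCat.{u} R))] :
    associatedPrimes R ↥(colimit G) ⊆ ⋃ j, associatedPrimes R ↥(G.obj j) := by
  rintro p hp0
  obtain ⟨hpp, x, hx⟩ := myIff.mp hp0
  obtain ⟨j, y, hy⟩ := Concrete.colimit_exists_rep G x
  set S : Set (Ideal R) :=
    {q | ∃ (k : J) (f : j ⟶ k), q = (R ∙ (G.map f y)).annihilator} with hS
  obtain ⟨q, ⟨k₀, f₀, hq⟩, hmax⟩ :=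
    set_has_maximal_iff_noetherian.mpr (inferInstance : IsNoetherian R R) S
      ⟨(R ∙ (G.map (𝟙 j) y)).annihilator, j, 𝟙 j, rfl⟩
  set z : G.obj k₀ := G.map f₀ y with hz
  have hι : colimit.ι G k₀ z = x := by
    rw [← hy, hz]
    exact colimit.w_apply G f₀ y
  have hpq : p = q := by
    ext r
    constructor
    · -- r ∈ p → r ∈ q
      intro hr
      rw [hx, Submodule.mem_annihilator_span_singleton] at hr
      have h0 : colimit.ι G k₀ (r • z) = colimit.ι G k₀ 0 := by
        rw [map_smul, hι, map_zero, hr]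
      obtain ⟨k, f, g, hfg⟩ := Concrete.colimit_exists_of_rep_eq G _ _ h0
      rw [map_zero] at hfg
      have hle : q ≤ (R ∙ (G.map f z)).annihilator := by
        intro c hc
        rw [hq, Submodule.mem_annihilator_span_singleton] at hc
        rw [Submodule.mem_annihilator_span_singleton, ← map_smul, hc, map_zero]
      have hmem : (R ∙ (G.map f z)).annihilator ∈ S := by
        refine ⟨k, f₀ ≫ f, ?_⟩
        rw [G.map_comp]
        rfl
      have heq : q = (R ∙ (G.map f z)).annihilator :=
        hle.eq_of_not_lt (hmax _ hmem)
      rw [heq, Submodule.mem_annihilator_span_singleton, ← map_smul]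
      exact hfg
    · -- r ∈ q → r ∈ p
      intro hr
      rw [hq, Submodule.mem_annihilator_span_singleton] at hr
      rw [hx, Submodule.mem_annihilator_span_singleton, ← hι, ← map_smul, hr,
        map_zero]
  refine Set.mem_iUnion.mpr ⟨k₀, ?_⟩
  exact AssociatedPrimes.mem_iff.mpr (myIff.mpr ⟨hpp, z, hpq.trans hq⟩)

theorem myAss_colimit_countable {J : Type} [SmallCategory J] [IsFiltered J]
    [Countable J] (G : J ⥤ ModuleCat.{u} R) [HasColimit G]
    [PreservesColimit G (forget (ModuleCat.{u} R))]
    (h : ∀ j, (associatedPrimes R ↥(G.obj j)).Countable) :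
    (associatedPrimes R ↥(colimit G)).Countable :=
  (Set.countable_iUnion h).mono (myAss_colimit_subset G)

end ColimitAss

/-- Let `R` be a Noetherian ring, `I` an ideal of `R`, and `M` a finitely generated
`R`-module. Then the set of associated primes `Ass_R(H^i_I(M))` is countable for
every `i ≥ 0`. -/
theorem countable_associatedPrimes_localCohomology
    (R : Type u) [CommRing R] [IsNoetherianRing R] (I : Ideal R)
    (M : ModuleCat.{u} R) [Module.Finite R M] (i : ℕ) :
    (associatedPrimes R ((localCohomology I i).obj M)).Countable := by
  letI : PreservesFilteredColimitsOfSize.{0, 0} (forget (ModuleCat.{u} R)) :=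
    preservesFilteredColimitsOfSize_shrink _
  let F := localCohomology.diagram (localCohomology.idealPowersDiagram I) i
  let G : ℕᵒᵖᵒᵖ ⥤ ModuleCat.{u} R :=
    F ⋙ (evaluation (ModuleCat.{u} R) (ModuleCat.{u} R)).obj M
  have e : ((localCohomology I i).obj M) ≅ colimit G :=
    colimitObjIsoColimitCompEvaluation F M
  have hcol : (associatedPrimes R ↥(colimit G)).Countable := by
    refine myAss_colimit_countable G (fun j => ?_)
    haveI : Module.Finite R ((ModuleCat.of R
        (R ⧸ (localCohomology.idealPowersDiagram I).obj (unop (unop (op j)))) :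
          ModuleCat.{u} R) : Type u) :=
      inferInstanceAs (Module.Finite R
        (R ⧸ (localCohomology.idealPowersDiagram I).obj (unop (unop (op j)))))
    haveI : Module.Finite R ((G.obj j : ModuleCat.{u} R) : Type u) :=
      ext_finite R (ModuleCat.of R
        (R ⧸ (localCohomology.idealPowersDiagram I).obj (unop (unop (op j))))) M i
    exact (myAssFinite _).countable
  refine hcol.mono ?_
  intro p hp
  exact AssociatedPrimes.mem_iff.mpr
    ((e.toLinearEquiv.isAssociatedPrime_iff).mp hp)
end

section
/- Let R be a Noetherian ring containing an uncountable field K. If an ideal J of R is contained in a countable union of ideals ∪_{n≥1} I_n, then J is contained in I_m for some m. -/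
private lemma pigeon_nat {K : Type*} [Uncountable K] (f : K → ℕ) :
    ∃ t t' : K, t ≠ t' ∧ f t = f t' := by
  by_contra hc
  push_neg at hc
  have hinj : Function.Injective f := fun a b hab => by
    by_contra hne
    exact hc a b hne hab
  exact not_countable (hinj.countable)

/-- Let `R` be a Noetherian ring containing an uncountable field `K`. If an ideal `J`
of `R` is contained in a countable union of ideals `⋃ n, I n`, then `J ≤ I m` for
some `m`. -/
theorem ideal_le_of_subset_countable_iUnion
    (K : Type*) [Field K] [Uncountable K]
    (R : Type*) [CommRing R] [IsNoetherianRing R] [Algebra K R]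
    (I : ℕ → Ideal R) (J : Ideal R)
    (h : (J : Set R) ⊆ ⋃ n, (I n : Set R)) :
    ∃ m, J ≤ I m := by
  classical
  -- key finite claim: every finite subset of J lies in a single I n
  have key : ∀ m : ℕ, ∀ s : Finset R, s.card = m → (↑s : Set R) ⊆ (J : Set R) →
      ∃ n, (↑s : Set R) ⊆ (I n : Set R) := by
    intro m
    induction m with
    | zero =>
      intro s hcard _
      refine ⟨0, ?_⟩
      rw [Finset.card_eq_zero.mp hcard]
      simp
    | succ m ih =>
      intro s hcard hsJ
      obtain ⟨a, s₀, ha, hins, hcard₀⟩ := Finset.card_eq_succ.mp hcard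
      subst hins
      have haJ : a ∈ J := hsJ (by simp)
      have hs₀J : (↑s₀ : Set R) ⊆ (J : Set R) := fun x hx => hsJ (by
        simp only [Finset.coe_insert, Set.mem_insert_iff]
        exact Or.inr hx)
      rcases s₀.eq_empty_or_nonempty with rfl | ⟨x₀, hx₀⟩
      · have := h haJ
        simp only [Set.mem_iUnion, SetLike.mem_coe] at this
        obtain ⟨n, hn⟩ := this
        refine ⟨n, ?_⟩
        intro y hy
        simp only [Finset.coe_insert, Finset.coe_empty, Set.mem_insert_iff,
          Set.mem_empty_iff_false, or_false] at hy
        subst hy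
        exact hn
      · have hset : ∀ t : K, ∃ n,
            (↑(s₀.image (fun x => x + algebraMap K R t * a)) : Set R) ⊆ (I n : Set R) := by
          intro t
          apply ih
          · rw [Finset.card_image_of_injective _ (add_left_injective _)]
            exact hcard₀
          · intro y hy
            simp only [Finset.coe_image, Set.mem_image, Finset.mem_coe] at hy
            obtain ⟨x, hx, rfl⟩ := hy
            exact J.add_mem (hs₀J hx) (J.mul_mem_left _ haJ)
        choose f hf using hset
        obtain ⟨t, t', hne, heq⟩ := pigeon_nat f
        have h1 : ∀ x ∈ s₀, x + algebraMap K R t * a ∈ I (f t) := fun x hx =>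
          hf t (by
            simp only [Finset.coe_image, Set.mem_image, Finset.mem_coe]
            exact ⟨x, hx, rfl⟩)
        have h2 : ∀ x ∈ s₀, x + algebraMap K R t' * a ∈ I (f t) := fun x hx => by
          rw [heq]
          exact hf t' (by
            simp only [Finset.coe_image, Set.mem_image, Finset.mem_coe]
            exact ⟨x, hx, rfl⟩)
        have haI : a ∈ I (f t) := by
          have hd : algebraMap K R (t - t') * a ∈ I (f t) := by
            have e : algebraMap K R (t - t') * a =
                (x₀ + algebraMap K R t * a) - (x₀ + algebraMap K R t' * a) := by
              rw [map_sub]; ring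
            rw [e]
            exact (I (f t)).sub_mem (h1 x₀ hx₀) (h2 x₀ hx₀)
          have e2 : a = algebraMap K R (t - t')⁻¹ * (algebraMap K R (t - t') * a) := by
            rw [← mul_assoc, ← map_mul, inv_mul_cancel₀ (sub_ne_zero.mpr hne),
              map_one, one_mul]
          rw [e2]
          exact (I (f t)).mul_mem_left _ hd
        refine ⟨f t, ?_⟩
        intro y hy
        simp only [Finset.coe_insert, Set.mem_insert_iff, Finset.mem_coe] at hy
        rcases hy with rfl | hy
        · exact haI
        · have e3 : y = (y + algebraMap K R t * a) - algebraMap K R t * a := by ring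
          rw [SetLike.mem_coe, e3]
          exact (I (f t)).sub_mem (h1 y hy) ((I (f t)).mul_mem_left _ haI)
  obtain ⟨s, hspan⟩ := (IsNoetherian.noetherian J : J.FG)
  have hsJ : (↑s : Set R) ⊆ (J : Set R) := by
    rw [← hspan]
    exact Ideal.subset_span
  obtain ⟨n, hn⟩ := key s.card s rfl hsJ
  exact ⟨n, hspan ▸ Ideal.span_le.mpr hn⟩
end

section
/- Let R be a Noetherian ring containing an uncountable field, let {p_n}_{n≥1} be a countable family of pairwise incomparable prime ideals of R, and let S = R \ ∪_{n≥1} p_n. Then each extended ideal p_n S^{-1}R is a maximal ideal of S^{-1}R, and every maximal ideal of S^{-1}R equals p_n S^{-1}R for some n. -/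
/-- Key combination lemma: from a list of elements one can form an element of their span
which lies in `p n` only if all list elements do. -/
theorem countable_avoid_list
    (K : Type*) [Field K] [Uncountable K]
    (R : Type*) [CommRing R] [Algebra K R]
    (p : ℕ → Ideal R) (l : List R) :
    ∃ a ∈ Ideal.span {x | x ∈ l}, ∀ n, a ∈ p n → ∀ x ∈ l, x ∈ p n := by
  induction l with
  | nil =>
    exact ⟨0, Submodule.zero_mem _, fun n _ x hx => absurd hx List.not_mem_nil⟩
  | cons b l ih =>
    obtain ⟨a, haspan, ha⟩ := ih
    set T : ℕ → Set K := fun n => {t : K | a + algebraMap K R t * b ∈ p n ∧ b ∉ p n} with hT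
    have hsub : ∀ n, (T n).Subsingleton := by
      intro n t ht t' ht'
      by_contra hne
      have hd : (a + algebraMap K R t * b) - (a + algebraMap K R t' * b) ∈ p n :=
        (p n).sub_mem ht.1 ht'.1
      have : algebraMap K R (t - t') * b ∈ p n := by
        rw [map_sub, sub_mul]
        simpa using hd
      have hu : IsUnit (algebraMap K R (t - t')) :=
        (isUnit_iff_ne_zero.mpr (sub_ne_zero.mpr hne)).map (algebraMap K R)
      exact ht.2 (((p n).unit_mul_mem_iff_mem hu).mp this)
    have hcnt : (⋃ n, T n).Countable :=
      Set.countable_iUnion fun n => (hsub n).countable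
    have : ∃ t : K, t ∉ ⋃ n, T n := by
      by_contra h
      push_neg at h
      have : (Set.univ : Set K).Countable := hcnt.mono fun t _ => h t
      exact (Set.not_countable_univ) this
    obtain ⟨t, ht⟩ := this
    refine ⟨a + algebraMap K R t * b, ?_, ?_⟩
    · refine Submodule.add_mem _ (Ideal.span_mono (fun x hx => List.mem_cons_of_mem b hx) haspan) ?_
      exact Ideal.mul_mem_left _ _ (Ideal.subset_span List.mem_cons_self)
    · intro n hn x hx
      have hb : b ∈ p n := by
        by_contra hb
        exact ht (Set.mem_iUnion.mpr ⟨n, hn, hb⟩)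
      have hA : a ∈ p n := by
        have := (p n).sub_mem hn (Ideal.mul_mem_left _ (algebraMap K R t) hb)
        simpa using this
      rcases List.mem_cons.mp hx with rfl | hx
      · exact hb
      · exact ha n hA x hx

/-- Countable prime avoidance over a ring containing an uncountable field. -/
theorem countable_avoid
    (K : Type*) [Field K] [Uncountable K]
    (R : Type*) [CommRing R] [IsNoetherianRing R] [Algebra K R]
    (p : ℕ → Ideal R) (I : Ideal R) (hI : ∀ x ∈ I, ∃ n, x ∈ p n) :
    ∃ n, I ≤ p n := by
  obtain ⟨s, hs⟩ := (isNoetherianRing_iff_ideal_fg R).mp ‹_› I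
  obtain ⟨a, haspan, ha⟩ := countable_avoid_list K R p s.toList
  have hset : {x | x ∈ s.toList} = (s : Set R) := by
    ext x; simp
  rw [hset, hs] at haspan
  obtain ⟨n, hn⟩ := hI a haspan
  refine ⟨n, ?_⟩
  rw [← hs, Ideal.span_le]
  intro x hx
  exact ha n hn x (by simpa using hx)

/-- Let `R` be a Noetherian ring containing an uncountable field, `{p n}` a countable
family of pairwise incomparable prime ideals of `R`, and `S = R \ ⋃ n, p n`. Then each
extended ideal `(p n) S⁻¹R` is maximal in `S⁻¹R`, and every maximal ideal of `S⁻¹R` is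
of this form. -/
theorem maximalIdeals_of_localization_away_countable_primes
    (K : Type*) [Field K] [Uncountable K]
    (R : Type*) [CommRing R] [IsNoetherianRing R] [Algebra K R]
    (p : ℕ → Ideal R) (hp : ∀ n, (p n).IsPrime)
    (hinc : ∀ i j, i ≠ j → ¬ p i ≤ p j)
    (S : Submonoid R) (hS : (S : Set R) = {x : R | ∀ n, x ∉ p n}) :
    (∀ n, ((p n).map (algebraMap R (Localization S))).IsMaximal) ∧
      (∀ m : Ideal (Localization S), m.IsMaximal →
        ∃ n, m = (p n).map (algebraMap R (Localization S))) := by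
  set f := algebraMap R (Localization S)
  have hdisj : ∀ n, Disjoint (S : Set R) (p n : Set R) := by
    intro n
    rw [Set.disjoint_left]
    intro x hx hxp
    rw [hS] at hx
    exact hx n hxp
  -- any prime of the localization pulls back to a prime contained in some p n
  have key : ∀ m : Ideal (Localization S), m.IsPrime →
      ∃ n, m.comap f ≤ p n ∧ (m.comap f).IsPrime ∧ m = (m.comap f).map f := by
    intro m hm
    obtain ⟨hq, hqd⟩ := (IsLocalization.isPrime_iff_isPrime_disjoint S (Localization S) m).mp hm
    have hsub : ∀ x ∈ m.comap f, ∃ n, x ∈ p n := by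
      intro x hx
      by_contra h
      push_neg at h
      have hxS : x ∈ S := by rw [← SetLike.mem_coe, hS]; exact h
      exact Set.disjoint_left.mp hqd hxS hx
    obtain ⟨n, hn⟩ := countable_avoid K R p (m.comap f) hsub
    exact ⟨n, hn, hq, (IsLocalization.map_comap S (Localization S) m).symm⟩
  have hprime : ∀ n, ((p n).map f).IsPrime := fun n =>
    IsLocalization.isPrime_of_isPrime_disjoint S (Localization S) (p n) (hp n) (hdisj n)
  have hcomap : ∀ n, ((p n).map f).comap f = p n := fun n =>
    IsLocalization.comap_map_of_isPrime_disjoint S (Localization S) (hp n) (hdisj n)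
  constructor
  · intro n
    refine ⟨(hprime n).ne_top, ?_⟩
    intro J hJ
    by_contra hJt
    obtain ⟨m, hmmax, hJm⟩ := Ideal.exists_le_maximal J hJt
    obtain ⟨k, hk, hq, hmeq⟩ := key m hmmax.isPrime
    have hpk : p n ≤ m.comap f := by
      have : (p n).map f ≤ m := le_trans (le_of_lt hJ) hJm
      calc p n = ((p n).map f).comap f := (hcomap n).symm
        _ ≤ m.comap f := Ideal.comap_mono this
    have hnk : n = k := by
      by_contra hne
      exact hinc n k hne (le_trans hpk hk)
    have : m.comap f = p n := le_antisymm (hnk ▸ hk) hpk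
    have hm2 : m = (p n).map f := by rw [hmeq, this]
    exact absurd (lt_of_lt_of_le hJ (hm2 ▸ hJm)) (lt_irrefl _)
  · intro m hmmax
    obtain ⟨n, hn, hq, hmeq⟩ := key m hmmax.isPrime
    refine ⟨n, ?_⟩
    have hle : m ≤ (p n).map f := by
      rw [hmeq]; exact Ideal.map_mono hn
    exact (hmmax.eq_of_le (hprime n).ne_top hle)
end

section
/- Let R be a Noetherian ring containing an uncountable field, {p_n}_{n≥1} a countable family of pairwise incomparable primes, S = R \ ∪_n p_n, and T = S^{-1}R. For any subset Λ of {p_n}, setting U = ∩_{p∈Λ} p and V = ∩_{p∈Λ} pT, one has UT = V. -/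
/-- Let `R` be a Noetherian ring containing an uncountable field, `{p n}` a countable
family of pairwise incomparable primes, `S = R \ ⋃ n, p n`, and `T = S⁻¹R`. For any
subset `Λ` of the index set, with `U = ⋂_{n ∈ Λ} p n` and `V = ⋂_{n ∈ Λ} (p n)T`, one
has `UT = V`. -/
theorem map_iInf_eq_iInf_map_of_localization_away_countable_primes
    (K : Type*) [Field K] [Uncountable K]
    (R : Type*) [CommRing R] [IsNoetherianRing R] [Algebra K R]
    (p : ℕ → Ideal R) (hp : ∀ n, (p n).IsPrime)
    (hinc : ∀ i j, i ≠ j → ¬ p i ≤ p j)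
    (S : Submonoid R) (hS : (S : Set R) = {x : R | ∀ n, x ∉ p n})
    (Λ : Set ℕ) :
    (⨅ n ∈ Λ, p n).map (algebraMap R (Localization S)) =
      ⨅ n ∈ Λ, (p n).map (algebraMap R (Localization S)) := by
  refine le_antisymm (le_iInf fun n => le_iInf fun hn =>
    Ideal.map_mono (iInf_le_of_le n (iInf_le _ hn))) ?_
  intro v hv
  obtain ⟨⟨x, s⟩, rfl⟩ := IsLocalization.mk'_surjective S v
  have hx : x ∈ ⨅ n ∈ Λ, p n := by
    rw [Ideal.mem_iInf]
    intro n
    rw [Ideal.mem_iInf]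
    intro hn
    have hvn : IsLocalization.mk' (Localization S) x s ∈
        (p n).map (algebraMap R (Localization S)) := by
      have := Ideal.mem_iInf.mp hv n
      exact Ideal.mem_iInf.mp this hn
    have h1 : algebraMap R (Localization S) x ∈
        (p n).map (algebraMap R (Localization S)) := by
      rw [← IsLocalization.mk'_spec (Localization S) x s]
      exact Ideal.mul_mem_right _ _ hvn
    have hdisj : Disjoint (S : Set R) (p n : Set R) := by
      rw [hS, Set.disjoint_left]
      intro a ha hap
      exact ha n hap
    have hc := IsLocalization.comap_map_of_isPrime_disjoint S (Localization S)
      (I := p n) (hp n) hdisj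
    rw [← hc]
    exact h1
  have h2 : algebraMap R (Localization S) x ∈
      (⨅ n ∈ Λ, p n).map (algebraMap R (Localization S)) :=
    Ideal.mem_map_of_mem _ hx
  show IsLocalization.mk' (Localization S) x s ∈ _
  rw [IsLocalization.mk'_eq_mul_mk'_one]
  exact Ideal.mul_mem_right _ _ h2
end

section
/- Let R be a Noetherian ring and T = R[[X]]_X the localization of the power series ring R[[X]] at the element X. Then for every prime ideal p of R, the extension pT is a prime ideal of T, and pT ∩ R = p. -/
open PowerSeries

/-- Membership in the extension of a finitely generated ideal to the power series
ring is characterized by coefficientwise membership. -/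
theorem mem_map_C_iff_of_fg {R : Type*} [CommRing R] (p : Ideal R) (hfg : p.FG)
    (f : R⟦X⟧) :
    f ∈ p.map (PowerSeries.C (R := R)) ↔ ∀ n, PowerSeries.coeff (R := R) n f ∈ p := by
  constructor
  · intro hf
    refine Submodule.span_induction (p := fun f _ => ∀ n, PowerSeries.coeff (R := R) n f ∈ p)
      ?_ ?_ ?_ ?_ hf
    · rintro x ⟨a, ha, rfl⟩ n
      simp only [coeff_C]
      split
      · exact ha
      · exact p.zero_mem
    · simp
    · intro x y _ _ hx hy n
      simpa using p.add_mem (hx n) (hy n)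
    · intro c x _ hx n
      rw [smul_eq_mul, PowerSeries.coeff_mul]
      exact Ideal.sum_mem _ fun ij _ => p.mul_mem_left _ (hx ij.2)
  · intro hcoeff
    obtain ⟨s, rfl⟩ := hfg
    -- for each n, write the n-th coefficient as a combination of the generators
    have key : ∀ n, ∃ c : {x // x ∈ s} → R,
        ∑ i, c i * (i : R) = PowerSeries.coeff (R := R) n f := by
      intro n
      have := hcoeff n
      rw [show ((s : Set R)) = Set.range (Subtype.val : {x // x ∈ s} → R) by
        simp [Subtype.range_val]] at this
      exact (Ideal.mem_span_range_iff_exists_fun).mp this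
    choose c hc using key
    have : f = ∑ i : {x // x ∈ s}, PowerSeries.C (R := R) (i : R) * PowerSeries.mk (fun n => c n i) := by
      ext n
      rw [map_sum]
      simp only [coeff_C_mul, coeff_mk]
      rw [← hc n]
      exact (Finset.sum_congr rfl (by intros; ring)).symm
    rw [this]
    refine Ideal.sum_mem _ fun i _ => Ideal.mul_mem_right _ _ ?_
    exact Ideal.mem_map_of_mem _ (Ideal.subset_span i.2)

theorem powerSeries_map_C_isPrime {R : Type*} [CommRing R] [IsNoetherianRing R]
    (p : Ideal R) (hp : p.IsPrime) : (p.map (PowerSeries.C (R := R))).IsPrime := by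
  have hfg : p.FG := (isNoetherianRing_iff_ideal_fg R).mp ‹_› p
  have : (p.map (PowerSeries.C (R := R))) =
      RingHom.ker (PowerSeries.map (Ideal.Quotient.mk p)) := by
    ext f
    rw [mem_map_C_iff_of_fg p hfg, RingHom.mem_ker, PowerSeries.ext_iff]
    simp [Ideal.Quotient.eq_zero_iff_mem]
  rw [this]
  haveI : IsDomain (R ⧸ p) := Ideal.Quotient.isDomain p
  exact RingHom.ker_isPrime _

/-- Let `R` be a Noetherian ring and `T = R[[X]]_X` the localization of the power
series ring `R[[X]]` at `X`. Then for every prime ideal `p` of `R`, the extension `pT`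
is a prime ideal of `T`, and `pT ∩ R = p`. -/
theorem powerSeries_localization_map_prime
    (R : Type*) [CommRing R] [IsNoetherianRing R]
    (p : Ideal R) (hp : p.IsPrime) :
    (p.map (algebraMap R (Localization.Away (PowerSeries.X (R := R))))).IsPrime ∧
      (p.map (algebraMap R (Localization.Away (PowerSeries.X (R := R))))).comap
        (algebraMap R (Localization.Away (PowerSeries.X (R := R)))) = p := by
  set T := Localization.Away (PowerSeries.X (R := R))
  have hfg : p.FG := (isNoetherianRing_iff_ideal_fg R).mp ‹_› p
  set Q := p.map (PowerSeries.C (R := R)) with hQ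
  have hQprime : Q.IsPrime := powerSeries_map_C_isPrime p hp
  have hdisj : Disjoint ((Submonoid.powers (PowerSeries.X (R := R)) : Submonoid R⟦X⟧) : Set R⟦X⟧)
      (Q : Set R⟦X⟧) := by
    rw [Set.disjoint_left]
    rintro x ⟨n, rfl⟩ hx
    have := (mem_map_C_iff_of_fg p hfg _).mp hx n
    simp only [coeff_X_pow, if_pos rfl] at this
    exact hp.1 (p.eq_top_of_isUnit_mem this isUnit_one)
  have halg : algebraMap R T =
      (algebraMap R⟦X⟧ T).comp (algebraMap R R⟦X⟧) :=
    IsScalarTower.algebraMap_eq R R⟦X⟧ T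
  have hCalg : (algebraMap R R⟦X⟧) = PowerSeries.C (R := R) := rfl
  have hmap : p.map (algebraMap R T) = Q.map (algebraMap R⟦X⟧ T) := by
    rw [halg, ← Ideal.map_map, hCalg]
  constructor
  · rw [hmap]
    exact IsLocalization.isPrime_of_isPrime_disjoint
      (Submonoid.powers (PowerSeries.X (R := R))) T Q hQprime hdisj
  · rw [hmap, halg, ← Ideal.comap_comap,
      (show Ideal.comap (algebraMap R⟦X⟧ T) (Ideal.map (algebraMap R⟦X⟧ T) Q) = Q from
        IsLocalization.comap_map_of_isPrime_disjoint
        (Submonoid.powers (PowerSeries.X (R := R))) T hQprime hdisj)]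
    ext a
    rw [Ideal.mem_comap, hCalg, mem_map_C_iff_of_fg p hfg]
    constructor
    · intro h
      have := h 0
      simpa using this
    · intro ha n
      simp only [coeff_C]
      split <;> simp [ha]
end

section
/- Let T be a Noetherian ring, {Q_n}_{n≥1} an infinite family of distinct prime ideals of T, and P a prime ideal with P ⊆ Q_n and height(Q_n/P) = 1 for all n. Then ∩_{n≥1} Q_n = P. -/
/-- The height of an ideal `I`: the infimum of the heights (in the prime spectrum)
of the primes containing `I`. For a prime ideal this is its usual height. -/
noncomputable def idealHeight {R : Type*} [CommRing R] (I : Ideal R) : ℕ∞ :=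
  ⨅ (p : PrimeSpectrum R) (_ : I ≤ p.asIdeal), Order.height p

/-- Let `T` be a Noetherian ring, `{Q n}` an infinite family of distinct prime ideals
of `T`, and `P` a prime ideal with `P ⊆ Q n` and `height (Q n / P) = 1` for all `n`.
Then `⋂ n, Q n = P`. -/
theorem iInf_eq_of_height_one_over
    (T : Type*) [CommRing T] [IsNoetherianRing T]
    (Q : ℕ → Ideal T) (hQ : ∀ n, (Q n).IsPrime) (hdist : Function.Injective Q)
    (P : Ideal T) (hP : P.IsPrime)
    (hle : ∀ n, P ≤ Q n)
    (hht : ∀ n, idealHeight ((Q n).map (Ideal.Quotient.mk P)) = 1) :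
    (⨅ n, Q n) = P := by
  refine le_antisymm ?_ (le_iInf hle)
  intro x hx
  by_contra hxP
  set f := Ideal.Quotient.mk P with hf
  have hker : RingHom.ker f = P := Ideal.mk_ker
  -- the images of the Q n are prime
  have hprime : ∀ n, ((Q n).map f).IsPrime := fun n =>
    Ideal.map_isPrime_of_surjective Ideal.Quotient.mk_surjective (by rw [hker]; exact hle n)
  set y : T ⧸ P := f x with hy
  have hy0 : y ≠ 0 := fun h => hxP (Ideal.Quotient.eq_zero_iff_mem.mp h)
  have hxQ : ∀ n, x ∈ Q n := fun n => (Ideal.mem_iInf.mp hx) n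
  haveI : P.IsPrime := hP
  haveI : IsDomain (T ⧸ P) := Ideal.Quotient.isDomain P
  -- each q n has height 1
  set q : ℕ → PrimeSpectrum (T ⧸ P) := fun n => ⟨(Q n).map f, hprime n⟩ with hq
  have hht1 : ∀ n, Order.height (q n) = 1 := by
    intro n
    have := hht n
    rw [idealHeight] at this
    refine le_antisymm ?_ ?_
    · rw [← this]
      exact le_iInf₂ fun p hp => Order.height_mono (show q n ≤ p from hp)
    · rw [← this]
      exact iInf₂_le (q n) le_rfl
  -- each (Q n).map f is a minimal prime over (y)
  have hmin : ∀ n, (Q n).map f ∈ (Ideal.span {y}).minimalPrimes := by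
    intro n
    have hyQ : Ideal.span {y} ≤ (Q n).map f := by
      rw [Ideal.span_le, Set.singleton_subset_iff]
      exact Ideal.mem_map_of_mem f (hxQ n)
    haveI := hprime n
    obtain ⟨p, hp, hple⟩ := Ideal.exists_minimalPrimes_le hyQ
    haveI hpprime : p.IsPrime := hp.1.1
    have hyp : y ∈ p := hp.1.2 (Ideal.subset_span rfl)
    set p' : PrimeSpectrum (T ⧸ P) := ⟨p, hpprime⟩ with hp'
    have hbot : (⟨⊥, Ideal.bot_prime⟩ : PrimeSpectrum (T ⧸ P)) < p' := by
      refine lt_of_le_of_ne bot_le ?_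
      intro h
      have : p = (⊥ : Ideal (T ⧸ P)) := congrArg PrimeSpectrum.asIdeal h.symm
      rw [this] at hyp
      exact hy0 (Ideal.mem_bot.mp hyp)
    have h1le : 1 ≤ Order.height p' := by
      rw [ENat.one_le_iff_ne_zero]
      intro h
      exact absurd (Order.height_eq_zero.mp h (le_of_lt hbot)) (not_le_of_gt hbot)
    have hple' : p' ≤ q n := hple
    have : p' = q n := by
      by_contra hne
      have hlt : p' < q n := lt_of_le_of_ne hple' hne
      have hfin : Order.height p' < ⊤ := by
        calc Order.height p' ≤ Order.height (q n) := Order.height_mono hple'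
        _ = 1 := hht1 n
        _ < ⊤ := Ne.lt_top (by simp)
      have := Order.height_strictMono hlt hfin
      rw [hht1 n] at this
      exact absurd h1le (not_le_of_gt this)
    have : p = (Q n).map f := congrArg PrimeSpectrum.asIdeal this
    exact this ▸ hp
  -- finiteness of minimal primes
  have hfin : (Ideal.span {y}).minimalPrimes.Finite := by
    rw [Ideal.minimalPrimes_eq_comap]
    exact ((minimalPrimes.finite_of_isNoetherianRing _).image _)
  -- injectivity of n ↦ (Q n).map f
  have hinj : Function.Injective (fun n => (Q n).map f) := by
    intro a b hab
    apply hdist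
    have ha : Ideal.comap f ((Q a).map f) = Q a := by
      rw [Ideal.comap_map_of_surjective f Ideal.Quotient.mk_surjective,
        ← RingHom.ker_eq_comap_bot, hker, sup_eq_left.mpr (hle a)]
    have hb : Ideal.comap f ((Q b).map f) = Q b := by
      rw [Ideal.comap_map_of_surjective f Ideal.Quotient.mk_surjective,
        ← RingHom.ker_eq_comap_bot, hker, sup_eq_left.mpr (hle b)]
    rw [← ha, ← hb]
    exact congrArg (Ideal.comap f) hab
  exact Set.infinite_of_injective_forall_mem hinj hmin hfin
end
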